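/- arXiv:1608.02306 — 6 statements merged into one kernel-verified Lean document; each statement's English description precedes it below -/
import Mathlib

section
/- Let s be a nonzero complex number and for each positive integer n define [n] = i^{-(n+1)}·s^n + i^{(n+1)}·s^{-n}. Then for every positive integer n, the recursion [2n+1] = (2n+1)·[1] − [1]·∑_{k=1}^{n} [k]^2 holds. -/
/-!
Put `u = -i s` and `c = -i`, so that `[n] = c (uⁿ - u⁻ⁿ)` with `c² = -1`. Then
`[k]² = 2 - (u²ᵏ + u⁻²ᵏ)`, and the claim becomes the telescoping identity
`u²ⁿ⁺¹ - u⁻⁽²ⁿ⁺¹⁾ = (u - u⁻¹) (1 + ∑ₖ (u²ᵏ + u⁻²ᵏ))`.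
-/

open Complex Finset

section UnitPairs

variable {R : Type*} [CommRing R] {u v : R}

theorem pow_odd_sub_pow_odd_of_mul_eq_one (huv : u * v = 1) (n : ℕ) :
    u ^ (2 * n + 1) - v ^ (2 * n + 1) =
      (u - v) * (1 + ∑ k ∈ Icc 1 n, (u ^ (2 * k) + v ^ (2 * k))) := by
  induction n with
  | zero => simp
  | succ n ih =>
    rw [sum_Icc_succ_top (by omega)]
    linear_combination ih + (u ^ (2 * n) * u - v ^ (2 * n) * v) * huv

theorem sq_mul_pow_sub_pow_of_mul_eq_one {c : R} (hc : c ^ 2 = -1) (huv : u * v = 1) (k : ℕ) :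
    (c * (u ^ k - v ^ k)) ^ 2 = 2 - (u ^ (2 * k) + v ^ (2 * k)) := by
  have huvk : u ^ k * v ^ k = 1 := by rw [← mul_pow, huv, one_pow]
  linear_combination (u ^ k - v ^ k) ^ 2 * hc + 2 * huvk

theorem apply_odd_eq_of_eq_mul_pow_sub_pow {c : R} (hc : c ^ 2 = -1) (huv : u * v = 1)
    (b : ℕ → R) (hb : ∀ k, 0 < k → b k = c * (u ^ k - v ^ k)) (n : ℕ) :
    b (2 * n + 1) = (2 * n + 1 : R) * b 1 - b 1 * ∑ k ∈ Icc 1 n, b k ^ 2 := by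
  have hsum : ∑ k ∈ Icc 1 n, b k ^ 2 = 2 * n - ∑ k ∈ Icc 1 n, (u ^ (2 * k) + v ^ (2 * k)) := by
    rw [sum_congr rfl fun k hk => by
      rw [hb k (mem_Icc.1 hk).1, sq_mul_pow_sub_pow_of_mul_eq_one hc huv], sum_sub_distrib]
    simp [mul_comm]
  rw [hsum, hb _ (by omega), hb 1 one_pos, pow_odd_sub_pow_odd_of_mul_eq_one huv]
  ring

end UnitPairs

theorem stmt_1 (s : ℂ) (hs : s ≠ 0)
    (a : ℕ → ℂ)
    (ha : ∀ n : ℕ, 0 < n → a n = I ^ (-(n + 1 : ℤ)) * s ^ (n : ℤ) + I ^ ((n + 1 : ℤ)) * s ^ (-(n : ℤ))) :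
    ∀ n : ℕ, 0 < n →
      a (2 * n + 1) = (2 * n + 1 : ℂ) * a 1 - a 1 * ∑ k ∈ Finset.Icc 1 n, (a k) ^ 2 := by
  have huv : (-I * s) * (I * s⁻¹) = 1 := by
    rw [mul_mul_mul_comm, neg_mul, I_mul_I, mul_inv_cancel₀ hs]; norm_num
  have hb : ∀ k : ℕ, 0 < k → a k = -I * ((-I * s) ^ k - (I * s⁻¹) ^ k) := by
    intro k hk
    have hIpow : I ^ (-(k + 1 : ℤ)) = (-I) ^ (k + 1) := by
      rw [zpow_neg, show (k + 1 : ℤ) = ((k + 1 : ℕ) : ℤ) by push_cast; rfl, zpow_natCast,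
        ← inv_pow, inv_I]
    rw [ha k hk, hIpow, zpow_neg, show (k + 1 : ℤ) = ((k + 1 : ℕ) : ℤ) by push_cast; rfl,
      zpow_natCast, zpow_natCast, ← inv_pow]
    ring
  intro n _
  exact apply_odd_eq_of_eq_mul_pow_sub_pow (by simp) huv a hb n
end

section
/- Let s be a nonzero complex number and for each positive integer n define [n] = i^{-(n+1)}·s^n + i^{(n+1)}·s^{-n}. Then for every positive integer n, the recursion [2n]·[2]/2 = [1]^2·(2n − [n]^2/2 − ∑_{k=1}^{n−1} [k]^2) holds. -/
/-!
With `x = -i s` and `y = x⁻¹ = i s⁻¹` one has `[n] = -i (x ^ n - y ^ n)`, so the recursion is the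
identity `(x^(2n) - y^(2n)) (x^2 - y^2) = (x - y)^2 (4n + (x^n - y^n)^2 + 2 ∑_{0<k<n} (x^k - y^k)^2)`,
which holds in any commutative ring as soon as `x y = 1`: its increment from `n` to `n + 1` is a
polynomial identity in `x, y, x^n, y^n` modulo `x y = 1` and `x^n y^n = 1`.
-/

open Complex Finset

theorem pow_sub_pow_two_mul_mul_eq_of_mul_eq_one {R : Type*} [CommRing R] {x y : R}
    (hxy : x * y = 1) (n : ℕ) :
    (x ^ (2 * (n + 1)) - y ^ (2 * (n + 1))) * (x ^ 2 - y ^ 2) =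
      (x - y) ^ 2 * (4 * (n + 1) + (x ^ (n + 1) - y ^ (n + 1)) ^ 2 +
        2 * ∑ k ∈ Icc 1 n, (x ^ k - y ^ k) ^ 2) := by
  induction n with
  | zero =>
    rw [Icc_eq_empty (by omega), sum_empty]
    linear_combination 4 * (x - y) ^ 2 * hxy
  | succ n ih =>
    have hpq : x ^ (n + 1) * y ^ (n + 1) = 1 := by rw [← mul_pow, hxy, one_pow]
    rw [sum_Icc_succ_top (by omega)]
    push_cast
    linear_combination ih + (2 * (x - y) * ((x ^ (n + 1)) ^ 2 * x - (y ^ (n + 1)) ^ 2 * y) +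
      2 * x ^ (n + 1) * y ^ (n + 1) * (x - y) ^ 2) * hxy + 4 * (x - y) ^ 2 * hpq

theorem I_zpow_mul_add_I_zpow_mul_eq (s : ℂ) (n : ℕ) :
    I ^ (-(n + 1 : ℤ)) * s ^ (n : ℤ) + I ^ ((n + 1 : ℤ)) * s ^ (-(n : ℤ)) =
      -I * ((-I * s) ^ n - (I * s⁻¹) ^ n) := by
  rw [show (n + 1 : ℤ) = ((n + 1 : ℕ) : ℤ) by push_cast; rfl, zpow_neg, zpow_neg, zpow_natCast,
    zpow_natCast, ← inv_pow, ← inv_pow, inv_I]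
  ring

theorem stmt_2 (s : ℂ) (hs : s ≠ 0)
    (a : ℕ → ℂ)
    (ha : ∀ n : ℕ, 0 < n → a n = I ^ (-(n + 1 : ℤ)) * s ^ (n : ℤ) + I ^ ((n + 1 : ℤ)) * s ^ (-(n : ℤ))) :
    ∀ n : ℕ, 0 < n →
      a (2 * n) * a 2 / 2 =
        (a 1) ^ 2 * ((2 * n : ℂ) - (a n) ^ 2 / 2 - ∑ k ∈ Finset.Icc 1 (n - 1), (a k) ^ 2) := by
  intro n hn
  obtain ⟨m, rfl⟩ : ∃ m, n = m + 1 := ⟨n - 1, by omega⟩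
  set x := -I * s
  set y := I * s⁻¹
  have hxy : x * y = 1 := by linear_combination (-(s * s⁻¹)) * I_sq + mul_inv_cancel₀ hs
  have hd : ∀ k, 0 < k → a k = -I * (x ^ k - y ^ k) := fun k hk =>
    (ha k hk).trans (I_zpow_mul_add_I_zpow_mul_eq s k)
  have hsq : ∀ k, 0 < k → a k ^ 2 = -(x ^ k - y ^ k) ^ 2 := fun k hk => by
    rw [hd k hk, mul_pow, neg_sq, I_sq, neg_one_mul]
  rw [Nat.add_sub_cancel, sum_congr rfl fun k hk => hsq k (mem_Icc.1 hk).1, sum_neg_distrib,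
    hsq 1 one_pos, hsq (m + 1) m.succ_pos, hd _ (by omega), hd 2 two_pos]
  push_cast
  linear_combination (-1 / 2 : ℂ) * pow_sub_pow_two_mul_mul_eq_of_mul_eq_one hxy m +
    ((x ^ (2 * (m + 1)) - y ^ (2 * (m + 1))) * (x ^ 2 - y ^ 2) / 2) * I_sq
end

section
/- Define [n] = 2·sin(n·λ/2) for a real number λ and positive integer n. Then for all positive integers n, (2n+1)·[1]^2 = [1]·[2n+1] + ∑_{a=1}^{n} [1]^2·[a]^2. -/
open Finset

open Real in
/-- The quantum integer `[n]`. -/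
noncomputable def qint (lam : ℝ) (n : ℕ) : ℝ := 2 * sin (n * lam / 2)

/-- With `θ = (m + 1) λ`: `[2m+3] - [2m+1] = 2 [1] cos θ` and `[m+1]² = 2 (1 - cos θ)`, so the
`cos θ` terms cancel. -/
theorem qint_one_mul_sub_add_sq (lam : ℝ) (m : ℕ) :
    qint lam 1 * (qint lam (2 * m + 3) - qint lam (2 * m + 1)) +
      qint lam 1 ^ 2 * qint lam (m + 1) ^ 2 = 2 * qint lam 1 ^ 2 := by
  set θ : ℝ := (m + 1) * lam
  have hdiff : qint lam (2 * m + 3) - qint lam (2 * m + 1) = 2 * qint lam 1 * Real.cos θ := by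
    have hadd : ((2 * m + 3 : ℕ) : ℝ) * lam / 2 = θ + lam / 2 := by push_cast; ring
    have hsub : ((2 * m + 1 : ℕ) : ℝ) * lam / 2 = θ - lam / 2 := by push_cast; ring
    simp only [qint, hadd, hsub, Real.sin_add, Real.sin_sub, Nat.cast_one, one_mul]
    ring
  have hsq : qint lam (m + 1) ^ 2 = 2 * (1 - Real.cos θ) := by
    have hθ : θ = 2 * (((m + 1 : ℕ) : ℝ) * lam / 2) := by push_cast; ring
    rw [hθ, Real.cos_two_mul, qint]
    linear_combination 4 * Real.sin_sq_add_cos_sq (((m + 1 : ℕ) : ℝ) * lam / 2)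
  rw [hdiff, hsq]
  ring

theorem qint_sum_sq (lam : ℝ) (n : ℕ) :
    (2 * n + 1 : ℝ) * qint lam 1 ^ 2 =
      qint lam 1 * qint lam (2 * n + 1) + ∑ a ∈ Icc 1 n, qint lam 1 ^ 2 * qint lam a ^ 2 := by
  induction n with
  | zero => simp; ring
  | succ m ih =>
    rw [sum_Icc_succ_top (Nat.le_add_left 1 m), show 2 * (m + 1) + 1 = 2 * m + 3 by ring]
    push_cast
    linear_combination ih - qint_one_mul_sub_add_sq lam m

theorem stmt_3 (lam : ℝ) (b : ℕ → ℝ) (hb : ∀ n : ℕ, 0 < n → b n = 2 * Real.sin (n * lam / 2)) :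
    ∀ n : ℕ, 0 < n →
      (2 * n + 1 : ℝ) * (b 1) ^ 2 =
        b 1 * b (2 * n + 1) + ∑ a ∈ Finset.Icc 1 n, (b 1) ^ 2 * (b a) ^ 2 := by
  intro n _
  have hb_qint : ∀ a ∈ Icc 1 n, b a = qint lam a := fun a ha => hb a (mem_Icc.1 ha).1
  rw [sum_congr rfl fun a ha => by rw [hb_qint a ha], hb 1 one_pos, hb (2 * n + 1) (by omega)]
  exact qint_sum_sq lam n
end

section
/- Define [n] = 2·sin(n·λ/2) for a real number λ. For every positive integer n, n·[1]^2 = ∑_{μ ⊢ n} (1/(|Aut μ|·∏_i μ_i))·∏_i [μ_i]^2, where the sum is over all partitions μ of n, μ_i are the parts of μ, and |Aut μ| is the number of automorphisms of the partition (the product of the factorials of the multiplicities of each part size). -/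
/-!
Write `a m = [m]^2 = 2 - 2 cos (m λ)` and `g n = ∑_{μ ⊢ n} z_μ⁻¹ ∏ a μ_i`, where
`z_μ = |Aut μ| ∏ μ_i`. Removing one copy of a part `m` from `μ` costs a factor `m · mult_m(μ)`
in `z_μ`, and summing `m · mult_m(μ)` over the distinct parts gives `n`; hence
`n g n = ∑_{m=1}^n a m g (n - m)`, the coefficientwise form of `∑ g n tⁿ = exp (∑ a m tᵐ / m)`.
Together with `g 0 = 1` this recursion determines `g`. The cosine sum formula gives
`a (m+2) - 2 a (m+1) + a m = a 1 (2 - a (m+1))`, and two summations by parts show that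
`n ↦ n a 1` (with value `1` at `0`) satisfies the same recursion. Equivalently,
`∑ g n tⁿ = (1 - 2 cos λ t + t²) / (1 - t)²`.
-/

open Finset
open scoped Nat

def centralizerCard (s : Multiset ℕ) : ℕ :=
  (∏ k ∈ s.toFinset, (s.count k)!) * s.prod

theorem centralizerCard_pos {s : Multiset ℕ} (hs : ∀ i ∈ s, 0 < i) : 0 < centralizerCard s :=
  Nat.mul_pos (prod_pos fun _ _ => Nat.factorial_pos _) (Multiset.prod_pos hs)

theorem centralizerCard_cons (m : ℕ) (s : Multiset ℕ) :
    centralizerCard (m ::ₘ s) = m * (s.count m + 1) * centralizerCard s := by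
  have hfactorial (k : ℕ) :
      ((m ::ₘ s).count k)! = (s.count k)! * if k = m then s.count m + 1 else 1 := by
    rw [Multiset.count_cons]
    split_ifs with hk
    · rw [hk, Nat.factorial_succ, mul_comm]
    · simp
  have hsubset : ∏ k ∈ s.toFinset, (s.count k)! = ∏ k ∈ (m ::ₘ s).toFinset, (s.count k)! :=
    prod_subset (Multiset.toFinset_subset.mpr (Multiset.subset_cons s m)) fun k _ hk => by
      rw [Multiset.count_eq_zero_of_notMem (by simpa using hk), Nat.factorial_zero]
  simp only [centralizerCard, prod_congr rfl fun k _ => hfactorial k, prod_mul_distrib,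
    prod_ite_eq', Multiset.mem_toFinset, Multiset.mem_cons_self, if_true, ← hsubset,
    Multiset.prod_cons]
  ring

namespace Nat.Partition

theorem sum_sum_erase {M : Type*} [AddCommMonoid M] (n : ℕ) (F : ℕ → Multiset ℕ → M) :
    ∑ μ : Nat.Partition n, ∑ m ∈ μ.parts.toFinset, F m (μ.parts.erase m) =
      ∑ m ∈ Icc 1 n, ∑ ν : Nat.Partition (n - m), F m ν.parts := by
  rw [sum_comm' (t' := Icc 1 n) (s' := fun m => {μ : Nat.Partition n | m ∈ μ.parts})]
  · refine sum_congr rfl fun m hm => ?_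
    obtain ⟨hm1, hmn⟩ := mem_Icc.mp hm
    rw [sum_subtype _ (p := (m ∈ ·.parts)) (F := inferInstance) (by simp),
      ← (partitionWithPartEquiv hm1 hmn).sum_comp]
    simp
  · intro μ m
    simp only [mem_univ, Multiset.mem_toFinset, mem_filter, true_and, mem_Icc, iff_self_and]
    exact fun hm => ⟨μ.parts_pos hm, le_of_mem_parts hm⟩

end Nat.Partition

section SecondDifference

variable {R : Type*} [CommRing R] {a : ℕ → R}

theorem sub_add_mul_sum_Icc_of_second_difference (h0 : a 0 = 0)
    (hrec : ∀ m, a (m + 2) - 2 * a (m + 1) + a m = a 1 * (2 - a (m + 1))) (n : ℕ) :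
    a (n + 1) - a n + a 1 * ∑ m ∈ Icc 1 n, a m = (2 * n + 1) * a 1 := by
  induction n with
  | zero => simp [h0]
  | succ n ih =>
    rw [sum_Icc_succ_top (by omega)]
    push_cast
    linear_combination ih + hrec n

theorem add_mul_sum_Icc_of_second_difference (h0 : a 0 = 0)
    (hrec : ∀ m, a (m + 2) - 2 * a (m + 1) + a m = a 1 * (2 - a (m + 1))) (n : ℕ) :
    a (n + 1) + a 1 * ∑ m ∈ Icc 1 n, ((n : R) + 1 - m) * a m = (n + 1) ^ 2 * a 1 := by
  induction n with
  | zero => simp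
  | succ n ih =>
    have hsplit : ∑ m ∈ Icc 1 (n + 1), (((n + 1 : ℕ) : R) + 1 - m) * a m =
        ∑ m ∈ Icc 1 n, ((n : R) + 1 - m) * a m + ∑ m ∈ Icc 1 (n + 1), a m := by
      have htop : ∑ m ∈ Icc 1 (n + 1), ((n : R) + 1 - m) * a m =
          ∑ m ∈ Icc 1 n, ((n : R) + 1 - m) * a m := by
        rw [sum_Icc_succ_top (by omega)]
        push_cast
        ring
      rw [← htop, ← sum_add_distrib]
      push_cast
      exact sum_congr rfl fun m _ => by ring
    rw [hsplit]
    have := sub_add_mul_sum_Icc_of_second_difference h0 hrec (n + 1)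
    push_cast at this ⊢
    linear_combination ih + this

theorem natCast_mul_eq_sum_of_second_difference (h0 : a 0 = 0)
    (hrec : ∀ m, a (m + 2) - 2 * a (m + 1) + a m = a 1 * (2 - a (m + 1))) (n : ℕ) :
    n * (if n = 0 then 1 else n * a 1) =
      ∑ m ∈ Icc 1 n, a m * (if n - m = 0 then 1 else ((n - m : ℕ) : R) * a 1) := by
  rcases n with _ | n
  · simp
  · have hlower : ∀ m ∈ Icc 1 n,
        a m * (if n + 1 - m = 0 then 1 else ((n + 1 - m : ℕ) : R) * a 1) =
          a 1 * (((n : R) + 1 - m) * a m) := fun m hm => by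
      obtain ⟨-, hmn⟩ := mem_Icc.mp hm
      rw [if_neg (by omega), Nat.cast_sub (by omega)]
      push_cast
      ring
    rw [sum_Icc_succ_top (by omega), sum_congr rfl hlower, ← mul_sum, Nat.sub_self, if_pos rfl,
      if_neg n.succ_ne_zero]
    push_cast
    linear_combination -add_mul_sum_Icc_of_second_difference h0 hrec n

end SecondDifference

section PartitionSum

variable {K : Type*} [Field K]

def partitionSum (a : ℕ → K) (n : ℕ) : K :=
  ∑ μ : Nat.Partition n, (μ.parts.map a).prod / centralizerCard μ.parts

theorem partitionSum_zero (a : ℕ → K) : partitionSum a 0 = 1 := by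
  simp [partitionSum, centralizerCard]

theorem sum_mul_prod_div_centralizerCard [CharZero K] (a : ℕ → K) {s : Multiset ℕ}
    (hs : ∀ i ∈ s, 0 < i) :
    s.sum * ((s.map a).prod / centralizerCard s) =
      ∑ m ∈ s.toFinset, a m * ((s.erase m).map a).prod / centralizerCard (s.erase m) := by
  rw [Finset.sum_multiset_count s, Nat.cast_sum, sum_mul]
  refine sum_congr rfl fun m hmem => ?_
  have hm : m ∈ s := Multiset.mem_toFinset.mp hmem
  have hz : (centralizerCard (s.erase m) : K) ≠ 0 := by
    exact_mod_cast (centralizerCard_pos fun i hi => hs i (Multiset.mem_of_mem_erase hi)).ne'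
  have hm0 : (m : K) ≠ 0 := by exact_mod_cast (hs m hm).ne'
  have hcount : s.count m = (s.erase m).count m + 1 := by
    rw [← Multiset.count_cons_self, Multiset.cons_erase hm]
  rw [← Multiset.prod_map_erase hm, ← Multiset.cons_erase hm, centralizerCard_cons,
    Multiset.cons_erase hm, hcount]
  push_cast [smul_eq_mul]
  field_simp

theorem natCast_mul_partitionSum [CharZero K] (a : ℕ → K) (n : ℕ) :
    n * partitionSum a n = ∑ m ∈ Icc 1 n, a m * partitionSum a (n - m) := by
  simp only [partitionSum, mul_sum]
  calc ∑ μ : Nat.Partition n, (n : K) * ((μ.parts.map a).prod / centralizerCard μ.parts)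
      = ∑ μ : Nat.Partition n, ∑ m ∈ μ.parts.toFinset,
          a m * ((μ.parts.erase m).map a).prod / centralizerCard (μ.parts.erase m) :=
        sum_congr rfl fun μ _ => by
          simpa only [μ.parts_sum] using
            sum_mul_prod_div_centralizerCard a fun _ => μ.parts_pos
    _ = _ := by
      rw [Nat.Partition.sum_sum_erase n fun m t => a m * (t.map a).prod / centralizerCard t]
      simp only [mul_div_assoc]

theorem eq_of_natCast_mul_eq_sum [CharZero K] {a f g : ℕ → K}
    (hf : ∀ n : ℕ, n * f n = ∑ m ∈ Icc 1 n, a m * f (n - m))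
    (hg : ∀ n : ℕ, n * g n = ∑ m ∈ Icc 1 n, a m * g (n - m)) (h0 : f 0 = g 0) : f = g := by
  funext n
  induction n using Nat.strong_induction_on with
  | _ n ih =>
    rcases n with _ | n
    · exact h0
    · have hsum : ∑ m ∈ Icc 1 (n + 1), a m * f (n + 1 - m) =
          ∑ m ∈ Icc 1 (n + 1), a m * g (n + 1 - m) :=
        sum_congr rfl fun m hm => by rw [ih _ (by grind)]
      exact mul_left_cancel₀ (Nat.cast_ne_zero.mpr n.succ_ne_zero)
        ((hf _).trans (hsum.trans (hg _).symm))

theorem partitionSum_eq_of_second_difference [CharZero K] {a : ℕ → K} (h0 : a 0 = 0)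
    (hrec : ∀ m, a (m + 2) - 2 * a (m + 1) + a m = a 1 * (2 - a (m + 1))) {n : ℕ}
    (hn : n ≠ 0) : partitionSum a n = n * a 1 := by
  have := eq_of_natCast_mul_eq_sum (natCast_mul_partitionSum a)
    (natCast_mul_eq_sum_of_second_difference h0 hrec) (by simp [partitionSum_zero])
  simpa [hn] using congrFun this n

end PartitionSum

noncomputable def sqBracket (lam : ℝ) (p : ℕ) : ℝ := (2 * Real.sin (p * lam / 2)) ^ 2

theorem sqBracket_eq (lam : ℝ) (p : ℕ) : sqBracket lam p = 2 - 2 * Real.cos (p * lam) := by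
  rw [sqBracket, mul_pow, Real.sin_sq_eq_half_sub, mul_div_cancel₀ _ two_ne_zero]
  ring

theorem sqBracket_zero (lam : ℝ) : sqBracket lam 0 = 0 := by
  simp [sqBracket]

theorem sqBracket_second_difference (lam : ℝ) (m : ℕ) :
    sqBracket lam (m + 2) - 2 * sqBracket lam (m + 1) + sqBracket lam m =
      sqBracket lam 1 * (2 - sqBracket lam (m + 1)) := by
  have hcos := Real.cos_add_cos (((m : ℝ) + 2) * lam) (m * lam)
  simp only [sqBracket_eq]
  push_cast
  rw [show (((m : ℝ) + 2) * lam + m * lam) / 2 = ((m : ℝ) + 1) * lam by ring,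
    show (((m : ℝ) + 2) * lam - m * lam) / 2 = 1 * lam by ring] at hcos
  linear_combination -2 * hcos

theorem stmt_5 (lam : ℝ) (n : ℕ) (hn : 0 < n) :
    (n : ℝ) * (2 * Real.sin (lam / 2)) ^ 2 =
      ∑ mu : Nat.Partition n,
        (1 / ((∏ k ∈ mu.parts.toFinset, (Nat.factorial (mu.parts.count k)) : ℕ) *
              (mu.parts.prod : ℕ) : ℝ)) *
          (mu.parts.map (fun p => (2 * Real.sin (p * lam / 2)) ^ 2)).prod := by
  have hsummand (mu : Nat.Partition n) :
      1 / ((∏ k ∈ mu.parts.toFinset, (Nat.factorial (mu.parts.count k)) : ℕ) *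
          (mu.parts.prod : ℕ) : ℝ) *
        (mu.parts.map (fun p => (2 * Real.sin (p * lam / 2)) ^ 2)).prod =
      (mu.parts.map (sqBracket lam)).prod / centralizerCard mu.parts := by
    rw [one_div_mul_eq_div, centralizerCard, Nat.cast_mul]
    congr 2
    simp only [bind_pure_comp, Multiset.fmap_def, Multiset.map_map]
    rfl
  rw [sum_congr rfl fun mu _ => hsummand mu, ← partitionSum,
    partitionSum_eq_of_second_difference (sqBracket_zero lam) (sqBracket_second_difference lam)
      hn.ne']
  simp [sqBracket]
end

section
/- Let λ be a real number and for positive integers n define g(n) = (2·sin(nλ/2))². Then the identity ∑_{μ ⊢ n} (∏_i g(μ_i))/(|Aut μ|·∏_i μ_i) = n·g(1) holds for n = 1, 2, 3. -/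
theorem stmt_7 (lam : ℝ) (g : ℕ → ℝ)
    (hg : ∀ n : ℕ, 0 < n → g n = (2 * Real.sin (n * lam / 2)) ^ 2) :
    (1 : ℝ) * g 1 = g 1 ∧
    2 * g 1 = g 2 / 2 + (g 1) ^ 2 / 2 ∧
    3 * g 1 = g 3 / 3 + g 1 * g 2 / 2 + (g 1) ^ 3 / 6 := by
  have key : ∀ n : ℕ, 0 < n → g n = 2 - 2 * Real.cos (n * lam) := by
    intro n hn
    rw [hg n hn]
    have hc : Real.cos ((n : ℝ) * lam)
        = Real.cos ((n : ℝ) * lam / 2) ^ 2 - Real.sin ((n : ℝ) * lam / 2) ^ 2 := by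
      conv_lhs => rw [show (n : ℝ) * lam = 2 * ((n : ℝ) * lam / 2) by ring, Real.cos_two_mul']
    rw [hc]
    nlinarith [Real.sin_sq_add_cos_sq ((n : ℝ) * lam / 2)]
  have h1 := key 1 one_pos
  have h2 := key 2 two_pos
  have h3 := key 3 three_pos
  push_cast at h1 h2 h3
  rw [one_mul] at h1
  rw [Real.cos_two_mul] at h2
  rw [Real.cos_three_mul] at h3
  have hs := Real.sin_sq_add_cos_sq lam
  refine ⟨by ring, ?_, ?_⟩ <;> simp only [h1, h2, h3] <;> ring
end

section
/- Let z ∈ ℂ with z ≠ 0 and set a_n := i^{−(n+1)}z^n + i^{n+1}z^{−n} for n ≥ 1, and put x = a_1. Then (a_n)_{n≥1} satisfies the recursions a_{2n+1} = (2n+1)x − x·∑_{k=1}^n a_k² and a_{2n}·a_2/2 = x²·(2n − a_n²/2 − ∑_{k=1}^{n−1} a_k²) for all n ≥ 1. Furthermore, if (b_n)_{n≥1} is any sequence of elements of ℂ satisfying both recursions (with x = a_1) with b_1 = a_1 and a_2 = b_2 ≠ 0, then b_n = a_n for all n. -/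
open Complex Finset

theorem stmt_17 (z : ℂ) (hz : z ≠ 0) (a : ℕ → ℂ)
    (ha : ∀ n : ℕ, 0 < n →
      a n = I ^ (-(n + 1 : ℤ)) * z ^ (n : ℤ) + I ^ ((n + 1 : ℤ)) * z ^ (-(n : ℤ))) :
    (∀ n : ℕ, 0 < n →
        a (2 * n + 1) = (2 * n + 1 : ℂ) * a 1 - a 1 * ∑ k ∈ Finset.Icc 1 n, (a k) ^ 2) ∧
    (∀ n : ℕ, 0 < n →
        a (2 * n) * a 2 / 2 =
          (a 1) ^ 2 * ((2 * n : ℂ) - (a n) ^ 2 / 2 - ∑ k ∈ Finset.Icc 1 (n - 1), (a k) ^ 2)) ∧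
    (∀ b : ℕ → ℂ, b 1 = a 1 → b 2 = a 2 → a 2 ≠ 0 →
      (∀ n : ℕ, 0 < n →
        b (2 * n + 1) = (2 * n + 1 : ℂ) * b 1 - b 1 * ∑ k ∈ Finset.Icc 1 n, (b k) ^ 2) →
      (∀ n : ℕ, 0 < n →
        b (2 * n) * b 2 / 2 =
          (b 1) ^ 2 * ((2 * n : ℂ) - (b n) ^ 2 / 2 - ∑ k ∈ Finset.Icc 1 (n - 1), (b k) ^ 2)) →
      ∀ n : ℕ, 0 < n → b n = a n) := by
  obtain ⟨w, hwdef⟩ : ∃ w : ℂ, w = -I * z := ⟨_, rfl⟩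
  have hw : w ≠ 0 := by
    rw [hwdef]; exact mul_ne_zero (neg_ne_zero.mpr I_ne_zero) hz
  have hI2 : (I:ℂ)^2 = -1 := I_sq
  -- closed form
  have hform : ∀ n : ℕ, 0 < n → a n = I * ((w ^ n)⁻¹ - w ^ n) := by
    intro n hn
    rw [ha n hn]
    have hIn : ((-I : ℂ)) ^ n = (I ^ n)⁻¹ := by
      rw [← inv_pow, inv_I]
    have h1 : (I : ℂ) ^ (-(n + 1 : ℤ)) = (I ^ (n + 1))⁻¹ := by
      rw [zpow_neg]; norm_cast
    have h3 : (z : ℂ) ^ (-(n : ℤ)) = (z ^ n)⁻¹ := by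
      rw [zpow_neg]; norm_cast
    rw [h1, show (I : ℂ) ^ ((n + 1 : ℤ)) = I ^ (n + 1) by norm_cast, h3,
      show (z : ℂ) ^ ((n : ℤ)) = z ^ n by norm_cast, hwdef, mul_pow, hIn]
    have hIn' : (I:ℂ)^n ≠ 0 := pow_ne_zero _ I_ne_zero
    have hzn : z^n ≠ 0 := pow_ne_zero _ hz
    field_simp
    ring_nf
    linear_combination (z^(n*2)*I^n) * hI2
  -- key telescoping identity
  have key : ∀ n : ℕ,
      (w⁻¹ - w) * (1 + ∑ k ∈ Finset.Icc 1 n, (w ^ (2 * k) + (w ^ (2 * k))⁻¹))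
        = (w ^ (2 * n + 1))⁻¹ - w ^ (2 * n + 1) := by
    intro n
    induction n with
    | zero => simp
    | succ m ih =>
      rw [Finset.sum_Icc_succ_top (by omega), ← add_assoc, mul_add, ih]
      have h1 : w ^ (2 * m + 1) ≠ 0 := pow_ne_zero _ hw
      have h2 : w ^ (2 * (m + 1)) ≠ 0 := pow_ne_zero _ hw
      have h3 : w ^ (2 * (m + 1) + 1) ≠ 0 := pow_ne_zero _ hw
      field_simp
      ring
  -- squares
  have hsq : ∀ k : ℕ, 0 < k → (a k) ^ 2 = 2 - (w ^ (2 * k) + (w ^ (2 * k))⁻¹) := by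
    intro k hk
    rw [hform k hk]
    have h1 : w ^ k ≠ 0 := pow_ne_zero _ hw
    have h2 : w ^ (2 * k) = (w ^ k) ^ 2 := by rw [← pow_mul, mul_comm]
    rw [h2]
    field_simp
    ring_nf
    linear_combination (1 - 2*(w^k)^2 + (w^k)^4) * hI2
  have hsum : ∀ n : ℕ, ∑ k ∈ Finset.Icc 1 n, (a k) ^ 2
      = 2 * n - ∑ k ∈ Finset.Icc 1 n, (w ^ (2 * k) + (w ^ (2 * k))⁻¹) := by
    intro n
    rw [Finset.sum_congr rfl (fun k hk => hsq k (Finset.mem_Icc.mp hk).1),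
      Finset.sum_sub_distrib, Finset.sum_const, Nat.card_Icc]
    simp [Nat.add_sub_cancel, nsmul_eq_mul, mul_comm]
  -- Part 1: odd recursion
  have hodd : ∀ n : ℕ, 0 < n →
      a (2 * n + 1) = (2 * n + 1 : ℂ) * a 1 - a 1 * ∑ k ∈ Finset.Icc 1 n, (a k) ^ 2 := by
    intro n hn
    rw [hform (2 * n + 1) (by omega), hform 1 one_pos, hsum n, pow_one]
    linear_combination (-I) * key n
  -- Part 2: even recursion
  have heven : ∀ n : ℕ, 0 < n →
      a (2 * n) * a 2 / 2 =
        (a 1) ^ 2 * ((2 * n : ℂ) - (a n) ^ 2 / 2 - ∑ k ∈ Finset.Icc 1 (n - 1), (a k) ^ 2) := by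
    intro n hn
    obtain ⟨m, rfl⟩ : ∃ m, n = m + 1 := ⟨n - 1, by omega⟩
    rw [hform (2 * (m + 1)) (by omega), hform 2 two_pos, hform 1 one_pos,
      hform (m + 1) (by omega), show m + 1 - 1 = m from rfl, hsum m, pow_one]
    obtain ⟨t, htdef⟩ : ∃ t : ℂ, t = w ^ (m + 1) := ⟨_, rfl⟩
    have ht : t ≠ 0 := by rw [htdef]; exact pow_ne_zero _ hw
    have e1 : w ^ (2 * (m + 1)) = t ^ 2 := by
      rw [htdef, ← pow_mul]; ring_nf
    have e2 : w ^ (2 * m + 1) = t ^ 2 / w := by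
      rw [eq_div_iff hw, htdef, ← pow_mul, ← pow_succ]; ring_nf
    obtain ⟨G, hGdef⟩ : ∃ G : ℂ, G = ∑ k ∈ Finset.Icc 1 m, (w ^ (2 * k) + (w ^ (2 * k))⁻¹) :=
      ⟨_, rfl⟩
    have hK : (w⁻¹ - w) * (1 + G) = w / t ^ 2 - t ^ 2 / w := by
      rw [hGdef, key m, e2, inv_div]
    rw [e1, ← htdef, ← hGdef]
    have hIXY : ∀ X Y : ℂ, I * X * (I * Y) = -(X * Y) := fun X Y => by
      linear_combination X * Y * hI2
    have hsqI : ∀ X : ℂ, (I * X) ^ 2 = -X ^ 2 := fun X => by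
      rw [mul_pow, I_sq]; ring
    rw [show I * ((t ^ 2)⁻¹ - t ^ 2) * (I * ((w ^ 2)⁻¹ - w ^ 2)) / 2
        = -(((t ^ 2)⁻¹ - t ^ 2) * ((w ^ 2)⁻¹ - w ^ 2)) / 2 by rw [hIXY],
      hsqI, hsqI]
    push_cast
    field_simp at hK ⊢
    linear_combination (2 - 2*w^2) * hK
  refine ⟨hodd, heven, ?_⟩
  intro b hb1 hb2 ha2 hob heb n
  induction n using Nat.strong_induction_on with
  | _ n ih =>
    intro hn
    rcases Nat.even_or_odd n with ⟨m, hm⟩ | ⟨m, hm⟩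
    · -- n = 2m
      have hm' : n = 2 * m := by omega
      have hmpos : 0 < m := by omega
      subst hm'
      have hb2m := heb m hmpos
      have hbs : ∑ k ∈ Finset.Icc 1 (m - 1), (b k) ^ 2
          = ∑ k ∈ Finset.Icc 1 (m - 1), (a k) ^ 2 := by
        refine Finset.sum_congr rfl fun k hk => ?_
        have hk' := Finset.mem_Icc.mp hk
        rw [ih k (by omega) (by omega)]
      rw [hbs, hb1, hb2, ih m (by omega) hmpos] at hb2m
      rw [← heven m hmpos] at hb2m
      have h2 : b (2 * m) * a 2 = a (2 * m) * a 2 := by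
        linear_combination 2 * hb2m
      exact mul_right_cancel₀ ha2 h2
    · -- n = 2m+1
      have hm' : n = 2 * m + 1 := by omega
      subst hm'
      rcases Nat.eq_zero_or_pos m with rfl | hmpos
      · simpa using hb1
      have hb2m := hob m hmpos
      have hbs : ∑ k ∈ Finset.Icc 1 m, (b k) ^ 2
          = ∑ k ∈ Finset.Icc 1 m, (a k) ^ 2 := by
        refine Finset.sum_congr rfl fun k hk => ?_
        have hk' := Finset.mem_Icc.mp hk
        rw [ih k (by omega) (by omega)]
      rw [hbs, hb1] at hb2m
      rw [← hodd m hmpos] at hb2m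
      exact hb2m
end
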